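/- Let n ≥ 2 and let b_1,…,b_n ≥ 2 and c_1,…,c_n ≥ 1 be integers. Then B_n ∩ C_{n−1} ≠ ∅ if and only if 1/(q_n q_{n−1}) < 1/(t_{n−1}(t_{n−1} + t_{n−2})). -/

import Mathlib

/-! With `O = p_{n-1}/q_{n-1} + s_{n-1}/t_{n-1}` and `ε = (-1)^{n-1}`, the determinant identity
`p_k q_{k-1} - p_{k-1} q_k = ±1` of the matrices `∏ !![a_i, 1; 1, 0]` puts both intervals on the
same side of `O`: `B_n` runs from `O + ε/((q_n - q_{n-1}) q_{n-1})` (included) to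
`O + ε/(q_n q_{n-1})` (excluded), and `C_{n-1}` from `O` (included) to
`O + ε/(t_{n-1}(t_{n-1} + t_{n-2}))` (excluded). Since `q_n - q_{n-1} ≥ q_{n-1}`, they meet
exactly when the excluded endpoint of `B_n` is closer to `O` than that of `C_{n-1}`. -/

noncomputable section

namespace ShulgaPaper

open Filter Topology

/-- The value of the finite continued fraction `[0; a₁, …, aₙ]`
(the empty continued fraction has value `0`). -/
def cf : List ℕ → ℝ
  | [] => 0
  | a :: l => 1 / ((a : ℝ) + cf l)

/-- Iterates of the Gauss map, starting from the fractional part of `x`. -/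
def gaussIter (x : ℝ) : ℕ → ℝ
  | 0 => Int.fract x
  | n + 1 => Int.fract (1 / gaussIter x n)

/-- The `n`-th partial quotient `aₙ(x)` of the continued fraction expansion of `x`
(for `n ≥ 1`; a junk value is returned if it is undefined). -/
def pq (x : ℝ) (n : ℕ) : ℕ := ⌊1 / gaussIter x (n - 1)⌋₊

/-- The `n`-th partial quotient `aₙ(x)` of `x` is defined (`n ≥ 1`), i.e. `n` does not
exceed the length of the continued fraction expansion of `x`. -/
def pqDefined (x : ℝ) (n : ℕ) : Prop := gaussIter x (n - 1) ≠ 0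

/-- The set `G` of real numbers that are rational or whose partial quotients diverge. -/
def G : Set ℝ :=
  {x | (∃ q : ℚ, x = (q : ℝ)) ∨ Tendsto (fun n => pq x n) atTop atTop}

/-- The list of pairs `(b_k, c_k)`, `k = 1, …, n`, produced by (a totalized version of)
Shulga's algorithm applied to `α`. -/
def shulgaList (α : ℝ) : ℕ → List (ℕ × ℕ)
  | 0 => []
  | n + 1 =>
      let L := shulgaList α n
      let b := pq (α - cf (L.map Prod.snd)) (n + 1) + 1
      let c := pq (α - cf (L.map Prod.fst ++ [b])) (n + 1)
      L ++ [(b, c)]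

/-- The list `[b₁, …, bₙ]` of Shulga's algorithm applied to `α`. -/
def bList (α : ℝ) (n : ℕ) : List ℕ := (shulgaList α n).map Prod.fst

/-- The list `[c₁, …, cₙ]` of Shulga's algorithm applied to `α`. -/
def cList (α : ℝ) (n : ℕ) : List ℕ := (shulgaList α n).map Prod.snd

/-- `bₙ` of Shulga's algorithm applied to `α` (for `n ≥ 1`). -/
def shulgaB (α : ℝ) (n : ℕ) : ℕ := ((shulgaList α n).getLast?.getD (0, 0)).1

/-- `cₙ` of Shulga's algorithm applied to `α` (for `n ≥ 1`). -/
def shulgaC (α : ℝ) (n : ℕ) : ℕ := ((shulgaList α n).getLast?.getD (0, 0)).2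

/-- The first `n` steps of Shulga's algorithm applied to `α` are defined: for each step
`k + 1 ≤ n`, the partial quotients `a_{k+1}(α - [0;c₁,…,c_k])` and
`a_{k+1}(α - [0;b₁,…,b_{k+1}])` defining `b_{k+1}` and `c_{k+1}` exist
(in particular the algorithm has not stopped before step `n`). -/
def shulgaDefined (α : ℝ) (n : ℕ) : Prop :=
  ∀ k < n, pqDefined (α - cf (cList α k)) (k + 1) ∧
    pqDefined (α - cf (bList α (k + 1))) (k + 1)

/-- The half-open interval whose included endpoint is `x` and excluded endpoint is `y`,
the smaller one being the left endpoint. -/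
def hIco (x y : ℝ) : Set ℝ := if x ≤ y then Set.Ico x y else Set.Ioc y x

/-- The list `[a 1, …, a n]`. -/
def listOf (a : ℕ → ℕ) (n : ℕ) : List ℕ := (List.range n).map fun i => a (i + 1)

/-- The interval `B_k` determined by the digits `b`, `c` (`k ≥ 1`). -/
def Bset (b c : ℕ → ℕ) (k : ℕ) : Set ℝ :=
  hIco (cf (listOf b (k - 1) ++ [b k - 1]) + cf (listOf c (k - 1)))
    (cf (listOf b k) + cf (listOf c (k - 1)))

/-- The interval `C_k` determined by the digits `b`, `c` (`k ≥ 1`). -/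
def Cset (b c : ℕ → ℕ) (k : ℕ) : Set ℝ :=
  hIco (cf (listOf c k) + cf (listOf b k))
    (cf (listOf c (k - 1) ++ [c k + 1]) + cf (listOf b k))

/-- `A₀ = [0,1]` and `Aₙ = ⋂_{k=1}^{n} (B_k ∩ C_k)` for `n ≥ 1`. -/
def Aset (b c : ℕ → ℕ) : ℕ → Set ℝ
  | 0 => Set.Icc 0 1
  | n + 1 => ⋂ k ∈ Finset.Icc 1 (n + 1), (Bset b c k ∩ Cset b c k)

/-- The denominators of the convergents of `[0; a 1, a 2, …]`:
`q₀ = 1`, `q₁ = a 1`, `q_k = a k * q_{k-1} + q_{k-2}`. -/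
def qden (a : ℕ → ℕ) : ℕ → ℕ
  | 0 => 1
  | 1 => a 1
  | n + 2 => a (n + 2) * qden a (n + 1) + qden a n

/-- `contMat l = !![q, q'; p, p']`, where `p / q = cf l` and `q'` is the denominator of the
previous convergent. -/
def contMat (l : List ℕ) : Matrix (Fin 2) (Fin 2) ℝ :=
  (l.map fun a : ℕ => !![(a : ℝ), 1; 1, 0]).prod

lemma contMat_cons (a : ℕ) (l : List ℕ) :
    contMat (a :: l) = !![(a : ℝ), 1; 1, 0] * contMat l := by
  simp only [contMat, List.map_cons, List.prod_cons]

lemma contMat_cons_apply (a : ℕ) (l : List ℕ) :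
    contMat (a :: l) 0 0 = a * contMat l 0 0 + contMat l 1 0 ∧
    contMat (a :: l) 0 1 = a * contMat l 0 1 + contMat l 1 1 ∧
    contMat (a :: l) 1 0 = contMat l 0 0 ∧ contMat (a :: l) 1 1 = contMat l 0 1 := by
  simp [contMat, Matrix.mul_apply, Fin.sum_univ_two]

lemma contMat_append_singleton_apply (l : List ℕ) (x : ℕ) :
    contMat (l ++ [x]) 0 0 = contMat l 0 0 * x + contMat l 0 1 ∧
    contMat (l ++ [x]) 0 1 = contMat l 0 0 ∧
    contMat (l ++ [x]) 1 0 = contMat l 1 0 * x + contMat l 1 1 ∧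
    contMat (l ++ [x]) 1 1 = contMat l 1 0 := by
  simp [contMat, Matrix.mul_apply, Fin.sum_univ_two]

lemma det_contMat (l : List ℕ) : (contMat l).det = (-1) ^ l.length := by
  induction l with
  | nil => simp [contMat]
  | cons a l ih =>
    rw [contMat_cons, Matrix.det_mul, ih, Matrix.det_fin_two_of, List.length_cons, pow_succ']
    ring

lemma contMat_nonneg (l : List ℕ) (i j : Fin 2) : 0 ≤ contMat l i j := by
  induction l generalizing i j with
  | nil => simp [contMat, Matrix.one_apply, apply_ite]
  | cons a l ih =>
    obtain ⟨h00, h01, h10, h11⟩ := contMat_cons_apply a l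
    have := ih 0 0; have := ih 0 1; have := ih 1 0; have := ih 1 1
    fin_cases i <;> fin_cases j <;>
      simp only [Fin.zero_eta, Fin.mk_one, h00, h01, h10, h11] <;> positivity

lemma one_le_contMat_zero_zero {l : List ℕ} (hl : ∀ x ∈ l, 1 ≤ x) : 1 ≤ contMat l 0 0 := by
  induction l with
  | nil => simp [contMat]
  | cons a l ih =>
    have ha : (1 : ℝ) ≤ a := by exact_mod_cast hl a List.mem_cons_self
    have hq := ih fun x hx => hl x (List.mem_cons_of_mem a hx)
    rw [(contMat_cons_apply a l).1]
    nlinarith [contMat_nonneg l 1 0]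

lemma cf_eq_div {l : List ℕ} (hl : ∀ x ∈ l, 1 ≤ x) :
    cf l = contMat l 1 0 / contMat l 0 0 := by
  induction l with
  | nil => simp [cf, contMat]
  | cons a l ih =>
    have hl' : ∀ x ∈ l, 1 ≤ x := fun x hx => hl x (List.mem_cons_of_mem a hx)
    have hq := one_le_contMat_zero_zero hl'
    obtain ⟨h00, -, h10, -⟩ := contMat_cons_apply a l
    rw [cf, ih hl', h00, h10]
    field_simp

lemma cf_append_singleton {l : List ℕ} (hl : ∀ x ∈ l, 1 ≤ x) {x : ℕ} (hx : 1 ≤ x) :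
    cf (l ++ [x]) = cf l + (-1) ^ l.length /
      ((contMat l 0 0 * x + contMat l 0 1) * contMat l 0 0) := by
  have hlx : ∀ y ∈ l ++ [x], 1 ≤ y := by simpa [or_imp, forall_and] using ⟨hl, hx⟩
  have hq := one_le_contMat_zero_zero hl
  have hx' : (1 : ℝ) ≤ x := by exact_mod_cast hx
  have hdet := det_contMat l
  rw [Matrix.det_fin_two] at hdet
  obtain ⟨h00, -, h10, -⟩ := contMat_append_singleton_apply l x
  have hpos : 0 < contMat l 0 0 * x + contMat l 0 1 := by nlinarith [contMat_nonneg l 0 1]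
  rw [cf_eq_div hlx, cf_eq_div hl, h00, h10, ← hdet]
  generalize contMat l 0 0 = q at *
  generalize contMat l 0 1 = q' at *
  generalize contMat l 1 0 = p at *
  generalize contMat l 1 1 = p' at *
  rw [div_add_div _ _ (by positivity) (by positivity),
    div_eq_div_iff (by positivity) (by positivity)]
  ring

lemma cf_append_singleton_succ {l : List ℕ} (hl : ∀ x ∈ l, 1 ≤ x) {x : ℕ} (hx : 1 ≤ x) :
    cf (l ++ [x + 1]) = cf (l ++ [x]) + (-1) ^ (l.length + 1) /
      ((contMat l 0 0 * x + contMat l 0 1) *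
        (contMat l 0 0 * x + contMat l 0 1 + contMat l 0 0)) := by
  have hq := one_le_contMat_zero_zero hl
  have hx' : (1 : ℝ) ≤ x := by exact_mod_cast hx
  have hpos : 0 < contMat l 0 0 * x + contMat l 0 1 := by nlinarith [contMat_nonneg l 0 1]
  have hpos' : 0 < contMat l 0 0 * x + contMat l 0 1 + contMat l 0 0 := by linarith
  rw [cf_append_singleton hl (by omega), cf_append_singleton hl hx, pow_succ, Nat.cast_succ,
    show contMat l 0 0 * (x + 1) + contMat l 0 1 = contMat l 0 0 * x + contMat l 0 1 + contMat l 0 0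
      by ring]
  field_simp
  ring

lemma listOf_succ (a : ℕ → ℕ) (k : ℕ) : listOf a (k + 1) = listOf a k ++ [a (k + 1)] := by
  simp [listOf, List.range_succ]

lemma length_listOf (a : ℕ → ℕ) (k : ℕ) : (listOf a k).length = k := by
  simp [listOf]

lemma one_le_of_mem_listOf {a : ℕ → ℕ} {k : ℕ} (ha : ∀ i, 1 ≤ i → i ≤ k → 1 ≤ a i) :
    ∀ x ∈ listOf a k, 1 ≤ x := by
  simp only [listOf, List.mem_map, List.mem_range]
  rintro _ ⟨i, hi, rfl⟩
  exact ha (i + 1) (by omega) hi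

lemma contMat_listOf_zero_zero (a : ℕ → ℕ) : ∀ k, contMat (listOf a k) 0 0 = qden a k
  | 0 => by simp [listOf, contMat, qden]
  | 1 => by simp [listOf, contMat, qden]
  | k + 2 => by
    rw [listOf_succ, (contMat_append_singleton_apply _ _).1, contMat_listOf_zero_zero a (k + 1),
      listOf_succ, (contMat_append_singleton_apply _ _).2.1, contMat_listOf_zero_zero a k, qden]
    push_cast
    ring

lemma contMat_listOf_succ_zero_one (a : ℕ → ℕ) (k : ℕ) :
    contMat (listOf a (k + 1)) 0 1 = qden a k := by
  rw [listOf_succ, (contMat_append_singleton_apply _ _).2.1, contMat_listOf_zero_zero]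

lemma one_le_qden {a : ℕ → ℕ} {k : ℕ} (ha : ∀ i, 1 ≤ i → i ≤ k → 1 ≤ a i) :
    (1 : ℝ) ≤ qden a k :=
  contMat_listOf_zero_zero a k ▸ one_le_contMat_zero_zero (one_le_of_mem_listOf ha)

lemma cf_listOf_append_singleton {a : ℕ → ℕ} {k : ℕ} (ha : ∀ i, 1 ≤ i → i ≤ k + 1 → 1 ≤ a i)
    {x : ℕ} (hx : 1 ≤ x) :
    cf (listOf a (k + 1) ++ [x]) = cf (listOf a (k + 1)) +
      (-1) ^ (k + 1) / ((qden a (k + 1) * x + qden a k) * qden a (k + 1)) := by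
  rw [cf_append_singleton (one_le_of_mem_listOf ha) hx, length_listOf,
    contMat_listOf_zero_zero, contMat_listOf_succ_zero_one]

lemma cf_listOf_append_succ {a : ℕ → ℕ} {k : ℕ} (ha : ∀ i, 1 ≤ i → i ≤ k + 1 → 1 ≤ a i) :
    cf (listOf a k ++ [a (k + 1) + 1]) = cf (listOf a (k + 1)) +
      (-1) ^ (k + 1) / (qden a (k + 1) * (qden a (k + 1) + qden a k)) := by
  have hl := one_le_of_mem_listOf fun i h1 h2 => ha i h1 (h2.trans k.le_succ)
  rw [cf_append_singleton_succ hl (ha (k + 1) k.succ_pos le_rfl), length_listOf,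
    ← (contMat_append_singleton_apply _ _).1, ← listOf_succ, contMat_listOf_zero_zero,
    contMat_listOf_zero_zero]

lemma hIco_inter_hIco_nonempty_iff {O ε dA dB dT : ℝ} (hε : ε = 1 ∨ ε = -1) (hA : 0 < dA)
    (hAB : dA < dB) (hT : 0 < dT) :
    (hIco (O + ε / dA) (O + ε / dB) ∩ hIco O (O + ε / dT)).Nonempty ↔ 1 / dB < 1 / dT := by
  have hBA : 1 / dB < 1 / dA := one_div_lt_one_div_of_lt hA hAB
  have hB : 0 < 1 / dB := one_div_pos.2 (hA.trans hAB)
  have hT' : 0 < 1 / dT := one_div_pos.2 hT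
  rcases hε with rfl | rfl
  · rw [hIco, hIco, if_neg (by linarith), if_pos (by linarith)]
    constructor
    · rintro ⟨x, ⟨hx, -⟩, -, hx'⟩
      linarith
    · intro h
      refine ⟨min (O + 1 / dA) (O + (1 / dB + 1 / dT) / 2), ⟨?_, min_le_left _ _⟩, ?_, ?_⟩
      · exact lt_min (by linarith) (by linarith)
      · exact le_min (by linarith) (by linarith)
      · exact (min_le_right _ _).trans_lt (by linarith)
  · simp only [neg_div, ← sub_eq_add_neg] at *
    rw [hIco, hIco, if_pos (by linarith), if_neg (by linarith)]
    constructor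
    · rintro ⟨x, ⟨-, hx⟩, hx', -⟩
      linarith
    · intro h
      refine ⟨max (O - 1 / dA) (O - (1 / dB + 1 / dT) / 2), ⟨le_max_left _ _, ?_⟩, ?_, ?_⟩
      · exact max_lt (by linarith) (by linarith)
      · exact lt_max_of_lt_right (by linarith)
      · exact max_le (by linarith) (by linarith)

lemma qden_add_two_cast (a : ℕ → ℕ) (k : ℕ) :
    (qden a (k + 2) : ℝ) = qden a (k + 1) * a (k + 2) + qden a k := by
  simp only [qden]
  push_cast
  ring

lemma qden_le_qden_add_two_sub {a : ℕ → ℕ} {k : ℕ} (ha : ∀ i, 1 ≤ i → i ≤ k + 1 → 1 ≤ a i)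
    (hak : 2 ≤ a (k + 2)) : (qden a (k + 1) : ℝ) ≤ qden a (k + 2) - qden a (k + 1) := by
  have hq := one_le_qden ha
  have : (2 : ℝ) ≤ a (k + 2) := by exact_mod_cast hak
  rw [qden_add_two_cast]
  nlinarith [(qden a k).cast_nonneg (α := ℝ)]

lemma Bset_add_two_eq {b c : ℕ → ℕ} {m : ℕ} (hb : ∀ i, 1 ≤ i → i ≤ m + 1 → 1 ≤ b i)
    (hbm : 2 ≤ b (m + 2)) :
    Bset b c (m + 2) =
      hIco (cf (listOf b (m + 1)) + cf (listOf c (m + 1)) +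
          (-1) ^ (m + 1) / ((qden b (m + 2) - qden b (m + 1)) * qden b (m + 1)))
        (cf (listOf b (m + 1)) + cf (listOf c (m + 1)) +
          (-1) ^ (m + 1) / (qden b (m + 2) * qden b (m + 1))) := by
  rw [Bset, show m + 2 - 1 = m + 1 from rfl, listOf_succ b (m + 1),
    cf_listOf_append_singleton (x := b (m + 2) - 1) hb (by omega),
    cf_listOf_append_singleton (x := b (m + 2)) hb (by omega),
    Nat.cast_sub (by omega : 1 ≤ b (m + 2)), qden_add_two_cast]
  congr 1 <;> ring

lemma Cset_succ_eq {b c : ℕ → ℕ} {m : ℕ} (hc : ∀ i, 1 ≤ i → i ≤ m + 1 → 1 ≤ c i) :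
    Cset b c (m + 1) =
      hIco (cf (listOf b (m + 1)) + cf (listOf c (m + 1)))
        (cf (listOf b (m + 1)) + cf (listOf c (m + 1)) +
          (-1) ^ (m + 1) / (qden c (m + 1) * (qden c (m + 1) + qden c m))) := by
  rw [Cset, show m + 1 - 1 = m from rfl, cf_listOf_append_succ hc]
  congr 1 <;> ring

/-- `Bₙ ∩ C_{n−1} ≠ ∅ ↔ 1/(qₙq_{n−1}) < 1/(t_{n−1}(t_{n−1}+t_{n−2}))`. -/
theorem stmt13 (n : ℕ) (hn : 2 ≤ n) (b c : ℕ → ℕ)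
    (hb : ∀ k : ℕ, 1 ≤ k → k ≤ n → 2 ≤ b k) (hc : ∀ k : ℕ, 1 ≤ k → k ≤ n → 1 ≤ c k) :
    (Bset b c n ∩ Cset b c (n - 1)).Nonempty ↔
      (1 : ℝ) / ((qden b n : ℝ) * (qden b (n - 1) : ℝ)) <
        (1 : ℝ) / ((qden c (n - 1) : ℝ) *
          ((qden c (n - 1) : ℝ) + (qden c (n - 2) : ℝ))) := by
  obtain ⟨m, rfl⟩ : ∃ m, n = m + 2 := ⟨n - 2, by omega⟩
  have hb' : ∀ i, 1 ≤ i → i ≤ m + 1 → 1 ≤ b i := fun i h1 h2 =>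
    (hb i h1 (by omega)).trans' (by norm_num)
  have hc' : ∀ i, 1 ≤ i → i ≤ m + 1 → 1 ≤ c i := fun i h1 h2 => hc i h1 (by omega)
  have hbm : 2 ≤ b (m + 2) := hb (m + 2) (by omega) le_rfl
  have hq := one_le_qden hb'
  have ht := one_le_qden hc'
  have hgap := qden_le_qden_add_two_sub hb' hbm
  rw [show m + 2 - 1 = m + 1 from rfl, show m + 2 - 2 = m from rfl, Bset_add_two_eq hb' hbm,
    Cset_succ_eq hc']
  refine hIco_inter_hIco_nonempty_iff (neg_one_pow_eq_or ℝ _) ?_ ?_ (by positivity)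
  · exact mul_pos (by linarith) (by linarith)
  · exact mul_lt_mul_of_pos_right (by linarith) (by linarith)

end ShulgaPaper
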